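/- arXiv:2403.19218 — 3 statements merged into one kernel-verified Lean document; each statement's English description precedes it below -/
import Mathlib

section
/- Let f : ℝ × ℝⁿ → ℝⁿ be continuous and L-Lipschitz in its second argument (L > 0). Let y : [0,T] → ℝⁿ solve y' = f(x,y), y(0) = y⁰, and let 0 = a₀ < a₁ < ⋯ < a_p = T. Suppose Nᵏ : [a_{k-1}, a_k] → ℝⁿ (k = 1,…,p) are functions and ȳᵏ : [a_{k-1}, a_k] → ℝⁿ are the exact solutions of the sub-IVPs (ȳᵏ)' = f(x, ȳᵏ) with ȳ¹(0) = y⁰ and ȳᵏ(a_{k-1}) = N^{k-1}(a_{k-1}) for k ≥ 2, and that sup_{x ∈ [a_{k-1},a_k]} ‖Nᵏ(x) − ȳᵏ(x)‖ ≤ ε for every k. Then the errors E_k := sup_{x ∈ [a_{k-1},a_k]} ‖Nᵏ(x) − y(x)‖ satisfy E₁ ≤ ε and the recursion E_k ≤ ε + e^{L(a_k − a_{k-1})} · E_{k-1} for 2 ≤ k ≤ p. -/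
/-!
On each sub-interval the network `Nᵏ` is within `ε` of the sub-solution `ȳᵏ`, and by
Grönwall's inequality `ȳᵏ` stays within `e^{L(a_k − a_{k-1})}` times its initial discrepancy
of the exact solution `y`. That discrepancy is `‖N^{k-1}(a_{k-1}) − y(a_{k-1})‖ ≤ E_{k-1}` for
`k ≥ 2`, and `0` for `k = 1`, since `ȳ¹` and `y` start from the same value.
-/

open Set

open scoped NNReal

section ApproximateSolution

variable {E : Type*} [NormedAddCommGroup E] [NormedSpace ℝ E]
  {v : ℝ → E → E} {K : ℝ≥0} {g₁ g₂ : ℝ → E} {c d : ℝ}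

theorem dist_le_of_hasDerivWithinAt_Icc_ODE (hv : ∀ t, LipschitzWith K (v t))
    (hg₁ : ∀ t ∈ Icc c d, HasDerivWithinAt g₁ (v t (g₁ t)) (Icc c d) t)
    (hg₂ : ∀ t ∈ Icc c d, HasDerivWithinAt g₂ (v t (g₂ t)) (Icc c d) t) :
    ∀ t ∈ Icc c d, dist (g₁ t) (g₂ t) ≤ dist (g₁ c) (g₂ c) * Real.exp (K * (t - c)) :=
  dist_le_of_trajectories_ODE hv
    (fun t ht => (hg₁ t ht).continuousWithinAt)
    (fun t ht => (hg₁ t (Ico_subset_Icc_self ht)).mono_of_mem_nhdsWithin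
      (Icc_mem_nhdsGE_of_mem ht))
    (fun t ht => (hg₂ t ht).continuousWithinAt)
    (fun t ht => (hg₂ t (Ico_subset_Icc_self ht)).mono_of_mem_nhdsWithin
      (Icc_mem_nhdsGE_of_mem ht))
    le_rfl

theorem norm_sub_le_of_approx_ODE_solution {N : ℝ → E} {ε : ℝ}
    (hv : ∀ t, LipschitzWith K (v t))
    (hg₁ : ∀ t ∈ Icc c d, HasDerivWithinAt g₁ (v t (g₁ t)) (Icc c d) t)
    (hg₂ : ∀ t ∈ Icc c d, HasDerivWithinAt g₂ (v t (g₂ t)) (Icc c d) t)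
    (hN : ∀ t ∈ Icc c d, ‖N t - g₁ t‖ ≤ ε) :
    ∀ t ∈ Icc c d, ‖N t - g₂ t‖ ≤ ε + Real.exp (K * (d - c)) * ‖g₁ c - g₂ c‖ := by
  intro t ht
  have hgron : ‖g₁ t - g₂ t‖ ≤ ‖g₁ c - g₂ c‖ * Real.exp (K * (t - c)) := by
    simpa only [dist_eq_norm] using dist_le_of_hasDerivWithinAt_Icc_ODE hv hg₁ hg₂ t ht
  calc ‖N t - g₂ t‖ ≤ ‖N t - g₁ t‖ + ‖g₁ t - g₂ t‖ := norm_sub_le_norm_sub_add_norm_sub _ _ _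
    _ ≤ ε + Real.exp (K * (d - c)) * ‖g₁ c - g₂ c‖ :=
      add_le_add (hN t ht) (hgron.trans (by rw [mul_comm]; gcongr; exact ht.2))

end ApproximateSolution

section SupOnIcc

variable {α β : Type*} [Preorder α] [ConditionallyCompleteLattice β] {g : α → β} {c d : α} {B : β}

theorem ciSup_Icc_le (hcd : c ≤ d) (h : ∀ x ∈ Icc c d, g x ≤ B) :
    ⨆ x : Icc c d, g x ≤ B :=
  have : Nonempty (Icc c d) := (nonempty_Icc.2 hcd).to_subtype
  ciSup_le fun x => h x.1 x.2

theorem le_ciSup_Icc {x : α} (hx : x ∈ Icc c d) (h : ∀ x ∈ Icc c d, g x ≤ B) :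
    g x ≤ ⨆ x : Icc c d, g x :=
  le_ciSup (f := fun x : Icc c d => g x) ⟨B, forall_mem_range.2 fun x => h x.1 x.2⟩ ⟨x, hx⟩

end SupOnIcc

theorem pwnn_error_recursion_general {n : ℕ}
    (f : ℝ → (Fin n → ℝ) → (Fin n → ℝ)) (L : ℝ) (hL : 0 < L)
    (hf_lip : ∀ x : ℝ, LipschitzWith (Real.toNNReal L) (f x))
    (T : ℝ) (y0 : Fin n → ℝ) (y : ℝ → (Fin n → ℝ))
    (hy : ∀ x ∈ Icc (0 : ℝ) T, HasDerivWithinAt y (f x (y x)) (Icc (0 : ℝ) T) x)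
    (hy0 : y 0 = y0)
    (p : ℕ) (hp : 1 ≤ p) (a : ℕ → ℝ)
    (ha0 : a 0 = 0) (haT : a p = T)
    (hmono : ∀ i, i < p → a i < a (i + 1))
    (N ybar : ℕ → ℝ → (Fin n → ℝ))
    (hybar_sol : ∀ k, 1 ≤ k → k ≤ p → ∀ x ∈ Icc (a (k - 1)) (a k),
      HasDerivWithinAt (ybar k) (f x (ybar k x)) (Icc (a (k - 1)) (a k)) x)
    (hybar_init1 : ybar 1 0 = y0)
    (hybar_init : ∀ k, 2 ≤ k → k ≤ p → ybar k (a (k - 1)) = N (k - 1) (a (k - 1)))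
    (ε : ℝ)
    (happrox : ∀ k, 1 ≤ k → k ≤ p → ∀ x ∈ Icc (a (k - 1)) (a k), ‖N k x - ybar k x‖ ≤ ε)
    (E : ℕ → ℝ)
    (hE : ∀ k, E k = ⨆ x : Icc (a (k - 1)) (a k), ‖N k x.1 - y x.1‖) :
    E 1 ≤ ε ∧
      ∀ k, 2 ≤ k → k ≤ p → E k ≤ ε + Real.exp (L * (a k - a (k - 1))) * E (k - 1) := by
  have hle : ∀ i j, i ≤ j → j ≤ p → a i ≤ a j := fun i j hij hjp =>
    (strictMonoOn_Iic_of_lt_succ hmono).monotoneOn (mem_Iic.2 (hij.trans hjp)) (mem_Iic.2 hjp) hij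
  have hsub : ∀ k, k ≤ p → Icc (a (k - 1)) (a k) ⊆ Icc 0 T := fun k hkp =>
    Icc_subset_Icc (ha0 ▸ hle 0 _ (Nat.zero_le _) (by omega)) (haT ▸ hle k p hkp le_rfl)
  have herr : ∀ k, 1 ≤ k → k ≤ p → ∀ x ∈ Icc (a (k - 1)) (a k),
      ‖N k x - y x‖ ≤
        ε + Real.exp (L * (a k - a (k - 1))) * ‖ybar k (a (k - 1)) - y (a (k - 1))‖ := by
    intro k hk1 hkp
    simpa only [Real.coe_toNNReal _ hL.le] using norm_sub_le_of_approx_ODE_solution hf_lip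
      (hybar_sol k hk1 hkp) (fun x hx => (hy x (hsub k hkp hx)).mono (hsub k hkp))
      (happrox k hk1 hkp)
  have hE_le : ∀ k, 1 ≤ k → k ≤ p →
      E k ≤ ε + Real.exp (L * (a k - a (k - 1))) * ‖ybar k (a (k - 1)) - y (a (k - 1))‖ :=
    fun k hk1 hkp => hE k ▸ ciSup_Icc_le (hle _ _ (by omega) hkp) (herr k hk1 hkp)
  refine ⟨by simpa [ha0, hybar_init1, hy0] using hE_le 1 le_rfl hp, fun k hk2 hkp => ?_⟩
  have hend : ‖N (k - 1) (a (k - 1)) - y (a (k - 1))‖ ≤ E (k - 1) :=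
    hE (k - 1) ▸ le_ciSup_Icc (right_mem_Icc.2 (hle _ _ (by omega) (by omega)))
      (herr (k - 1) (by omega) (by omega))
  calc E k ≤ ε + Real.exp (L * (a k - a (k - 1))) * ‖ybar k (a (k - 1)) - y (a (k - 1))‖ :=
        hE_le k (by omega) hkp
    _ ≤ ε + Real.exp (L * (a k - a (k - 1))) * E (k - 1) := by
        rw [hybar_init k hk2 hkp]
        gcongr

/-- PWNN error recursion: with `Eₖ = sup_{x ∈ [a_{k-1}, a_k]} ‖Nᵏ(x) − y(x)‖`,
one has `E₁ ≤ ε` and `Eₖ ≤ ε + e^{L(a_k − a_{k-1})} E_{k-1}` for `2 ≤ k ≤ p`. -/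
theorem pwnn_error_recursion {n : ℕ}
    (f : ℝ → (Fin n → ℝ) → (Fin n → ℝ)) (L : ℝ) (hL : 0 < L)
    (hf_cont : Continuous (Function.uncurry f))
    (hf_lip : ∀ x : ℝ, LipschitzWith (Real.toNNReal L) (f x))
    (T : ℝ) (y0 : Fin n → ℝ) (y : ℝ → (Fin n → ℝ))
    (hy : ∀ x ∈ Icc (0 : ℝ) T, HasDerivWithinAt y (f x (y x)) (Icc (0 : ℝ) T) x)
    (hy0 : y 0 = y0)
    (p : ℕ) (hp : 1 ≤ p) (a : ℕ → ℝ)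
    (ha0 : a 0 = 0) (haT : a p = T)
    (hmono : ∀ i, i < p → a i < a (i + 1))
    (N ybar : ℕ → ℝ → (Fin n → ℝ))
    (hybar_sol : ∀ k, 1 ≤ k → k ≤ p → ∀ x ∈ Icc (a (k - 1)) (a k),
      HasDerivWithinAt (ybar k) (f x (ybar k x)) (Icc (a (k - 1)) (a k)) x)
    (hybar_init1 : ybar 1 0 = y0)
    (hybar_init : ∀ k, 2 ≤ k → k ≤ p → ybar k (a (k - 1)) = N (k - 1) (a (k - 1)))
    (ε : ℝ)
    (happrox : ∀ k, 1 ≤ k → k ≤ p → ∀ x ∈ Icc (a (k - 1)) (a k), ‖N k x - ybar k x‖ ≤ ε)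
    (E : ℕ → ℝ)
    (hE : ∀ k, E k = ⨆ x : Icc (a (k - 1)) (a k), ‖N k x.1 - y x.1‖) :
    E 1 ≤ ε ∧
      ∀ k, 2 ≤ k → k ≤ p → E k ≤ ε + Real.exp (L * (a k - a (k - 1))) * E (k - 1) :=
  pwnn_error_recursion_general f L hL hf_lip T y0 y hy hy0 p hp a ha0 haT hmono N ybar hybar_sol
    hybar_init1 hybar_init ε happrox E hE
end

section
/- Under the hypotheses of the PWNN error recursion (f continuous and L-Lipschitz in y, y : [0,T] → ℝⁿ the exact solution with y(0)=y⁰, partition 0 = a₀ < ⋯ < a_p = T, ȳᵏ the exact sub-IVP solution with initial value N^{k-1}(a_{k-1}) at a_{k-1} (N⁰(0) := y⁰), and sup_{Δ_k} ‖Nᵏ − ȳᵏ‖ ≤ ε for all k), one has for every k ∈ {1,…,p} and every x ∈ [a_{k-1}, a_k]: ‖Nᵏ(x) − y(x)‖ ≤ ε · Σ_{j=1}^{k} e^{L(a_k − a_j)}; in particular the piecewise function ŷ, defined by ŷ(x) = Nᵏ(x) for x ∈ (a_{k-1}, a_k] and ŷ(0) = N¹(0), satisfies sup_{x ∈ [0,T]}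 ‖ŷ(x) − y(x)‖ ≤ p · ε · e^{LT}. -/
open Set

/-!
On `Δₖ` the triangle inequality through `ȳᵏ` and Grönwall's inequality for the two solutions
`ȳᵏ` and `y` of the `L`-Lipschitz ODE give
`‖Nᵏ − y‖ ≤ ε + ‖Nᵏ⁻¹(aₖ₋₁) − y(aₖ₋₁)‖ e^{L(aₖ − aₖ₋₁)}`.
Unrolling this recursion from `ȳ¹(0) = y(0)` produces `ε ∑ⱼ e^{L(aₖ − aⱼ)}`, each of whose at most
`p` terms is at most `e^{LT}`; and `ŷ` agrees at every point of `[0,T]` with some `Nᵏ`.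
-/

section Trajectories

open Real
open scoped NNReal

variable {E : Type*} [NormedAddCommGroup E] [NormedSpace ℝ E]
  {f : ℝ → E → E} {K : ℝ≥0} {a b : ℝ}

theorem dist_le_of_trajectories_ODE_Icc (hf : ∀ t, LipschitzWith K (f t)) {u v : ℝ → E}
    (hu : ∀ t ∈ Icc a b, HasDerivWithinAt u (f t (u t)) (Icc a b) t)
    (hv : ∀ t ∈ Icc a b, HasDerivWithinAt v (f t (v t)) (Icc a b) t) :
    ∀ t ∈ Icc a b, dist (u t) (v t) ≤ dist (u a) (v a) * exp (K * (t - a)) := by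
  have hright : ∀ w : ℝ → E, (∀ t ∈ Icc a b, HasDerivWithinAt w (f t (w t)) (Icc a b) t) →
      ∀ t ∈ Ico a b, HasDerivWithinAt w (f t (w t)) (Ici t) t := fun w hw t ht =>
    (hw t (Ico_subset_Icc_self ht)).mono_of_mem_nhdsWithin (Icc_mem_nhdsGE_of_mem ht)
  exact dist_le_of_trajectories_ODE hf (fun t ht => (hu t ht).continuousWithinAt) (hright u hu)
    (fun t ht => (hv t ht).continuousWithinAt) (hright v hv) le_rfl

theorem norm_sub_le_of_near_trajectory (hf : ∀ t, LipschitzWith K (f t)) {u v w : ℝ → E}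
    {ε : ℝ} (hu : ∀ t ∈ Icc a b, HasDerivWithinAt u (f t (u t)) (Icc a b) t)
    (hv : ∀ t ∈ Icc a b, HasDerivWithinAt v (f t (v t)) (Icc a b) t)
    (hw : ∀ t ∈ Icc a b, ‖w t - u t‖ ≤ ε) :
    ∀ t ∈ Icc a b, ‖w t - v t‖ ≤ ε + ‖u a - v a‖ * exp (K * (b - a)) := by
  intro t ht
  have hgron : ‖u t - v t‖ ≤ ‖u a - v a‖ * exp (K * (t - a)) := by
    simpa only [dist_eq_norm] using dist_le_of_trajectories_ODE_Icc hf hu hv t ht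
  calc ‖w t - v t‖ ≤ ‖w t - u t‖ + ‖u t - v t‖ := norm_sub_le_norm_sub_add_norm_sub _ _ _
    _ ≤ ε + ‖u a - v a‖ * exp (K * (b - a)) := by
      gcongr
      · exact hw t ht
      · exact hgron.trans (by gcongr; exact ht.2)

end Trajectories

section ErrorBound

open Real

noncomputable def pwnnErrorBound (ε L : ℝ) (a : ℕ → ℝ) (k : ℕ) : ℝ :=
  ε * ∑ j ∈ Finset.Icc 1 k, exp (L * (a k - a j))

variable {ε L : ℝ} {a : ℕ → ℝ}

@[simp]
theorem pwnnErrorBound_zero : pwnnErrorBound ε L a 0 = 0 := by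
  simp [pwnnErrorBound]

theorem pwnnErrorBound_succ (m : ℕ) :
    pwnnErrorBound ε L a (m + 1) =
      pwnnErrorBound ε L a m * exp (L * (a (m + 1) - a m)) + ε := by
  simp only [pwnnErrorBound, Finset.sum_Icc_succ_top (Nat.le_add_left 1 m), sub_self, mul_zero,
    exp_zero, mul_assoc, Finset.sum_mul, ← exp_add]
  ring_nf

theorem pwnnErrorBound_le {k : ℕ} {c : ℝ} (hε : 0 ≤ ε)
    (h : ∀ j ∈ Finset.Icc 1 k, L * (a k - a j) ≤ c) :
    pwnnErrorBound ε L a k ≤ k * ε * exp c := by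
  calc pwnnErrorBound ε L a k ≤ ε * ∑ _j ∈ Finset.Icc 1 k, exp c := by
        unfold pwnnErrorBound
        gcongr with j hj
        exact h j hj
    _ = k * ε * exp c := by
      simp only [Finset.sum_const, Nat.card_Icc, add_tsub_cancel_right, nsmul_eq_mul]; ring

end ErrorBound

theorem exists_mem_Ioc_pred_of_mem_Ioc {α : Type*} [LinearOrder α] {a : ℕ → α} {p : ℕ} {x : α}
    (hx : x ∈ Ioc (a 0) (a p)) : ∃ k, 1 ≤ k ∧ k ≤ p ∧ x ∈ Ioc (a (k - 1)) (a k) := by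
  classical
  have hex : ∃ k, x ≤ a k := ⟨p, hx.2⟩
  have hk0 : Nat.find hex ≠ 0 := fun h => (h ▸ Nat.find_spec hex).not_gt hx.1
  exact ⟨Nat.find hex, Nat.one_le_iff_ne_zero.2 hk0, Nat.find_min' hex hx.2,
    not_le.1 (Nat.find_min hex (by omega)), Nat.find_spec hex⟩

theorem norm_sub_le_pwnnErrorBound {E : Type*} [NormedAddCommGroup E] [NormedSpace ℝ E]
    {f : ℝ → E → E} {L : ℝ} (hL : 0 ≤ L) (hf : ∀ t, LipschitzWith L.toNNReal (f t))
    {p : ℕ} {a : ℕ → ℝ} (hmono : ∀ i < p, a i ≤ a (i + 1)) {y : ℝ → E} {N ybar : ℕ → ℝ → E}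
    {ε : ℝ}
    (hy : ∀ k, 1 ≤ k → k ≤ p → ∀ x ∈ Icc (a (k - 1)) (a k),
      HasDerivWithinAt y (f x (y x)) (Icc (a (k - 1)) (a k)) x)
    (hybar : ∀ k, 1 ≤ k → k ≤ p → ∀ x ∈ Icc (a (k - 1)) (a k),
      HasDerivWithinAt (ybar k) (f x (ybar k x)) (Icc (a (k - 1)) (a k)) x)
    (hinit1 : ybar 1 (a 0) = y (a 0))
    (hinit : ∀ k, 2 ≤ k → k ≤ p → ybar k (a (k - 1)) = N (k - 1) (a (k - 1)))
    (happrox : ∀ k, 1 ≤ k → k ≤ p → ∀ x ∈ Icc (a (k - 1)) (a k), ‖N k x - ybar k x‖ ≤ ε) :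
    ∀ k, 1 ≤ k → k ≤ p → ∀ x ∈ Icc (a (k - 1)) (a k),
      ‖N k x - y x‖ ≤ pwnnErrorBound ε L a k := by
  intro k hk1 hkp
  induction k with
  | zero => omega
  | succ m ih =>
    have hstart : ‖ybar (m + 1) (a m) - y (a m)‖ ≤ pwnnErrorBound ε L a m := by
      rcases Nat.eq_zero_or_pos m with rfl | hm
      · simp [hinit1]
      · have hlink := hinit (m + 1) (by omega) hkp
        simp only [Nat.add_sub_cancel] at hlink
        rw [hlink]
        have hprev : a (m - 1) ≤ a m := by
          simpa [Nat.sub_add_cancel hm] using hmono (m - 1) (by omega)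
        exact ih hm (by omega) (a m) ⟨hprev, le_rfl⟩
    intro x hx
    have hstep := norm_sub_le_of_near_trajectory hf (hybar (m + 1) hk1 hkp)
      (hy (m + 1) hk1 hkp) (happrox (m + 1) hk1 hkp) x hx
    simp only [Nat.add_sub_cancel, Real.coe_toNNReal _ hL] at hstep
    rw [pwnnErrorBound_succ]
    linarith [mul_le_mul_of_nonneg_right hstart (Real.exp_pos (L * (a (m + 1) - a m))).le]

theorem pwnn_global_error_bound_general {n : ℕ}
    (f : ℝ → (Fin n → ℝ) → (Fin n → ℝ)) (L : ℝ) (hL : 0 < L)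
    (hf_lip : ∀ x : ℝ, LipschitzWith (Real.toNNReal L) (f x))
    (T : ℝ) (y0 : Fin n → ℝ) (y : ℝ → (Fin n → ℝ))
    (hy : ∀ x ∈ Icc (0 : ℝ) T, HasDerivWithinAt y (f x (y x)) (Icc (0 : ℝ) T) x)
    (hy0 : y 0 = y0)
    (p : ℕ) (hp : 1 ≤ p) (a : ℕ → ℝ)
    (ha0 : a 0 = 0) (haT : a p = T)
    (hmono : ∀ i, i < p → a i < a (i + 1))
    (N ybar : ℕ → ℝ → (Fin n → ℝ))
    (hybar_sol : ∀ k, 1 ≤ k → k ≤ p → ∀ x ∈ Icc (a (k - 1)) (a k),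
      HasDerivWithinAt (ybar k) (f x (ybar k x)) (Icc (a (k - 1)) (a k)) x)
    (hybar_init1 : ybar 1 0 = y0)
    (hybar_init : ∀ k, 2 ≤ k → k ≤ p → ybar k (a (k - 1)) = N (k - 1) (a (k - 1)))
    (ε : ℝ)
    (happrox : ∀ k, 1 ≤ k → k ≤ p → ∀ x ∈ Icc (a (k - 1)) (a k), ‖N k x - ybar k x‖ ≤ ε)
    (yhat : ℝ → (Fin n → ℝ))
    (hyhat0 : yhat 0 = N 1 0)
    (hyhat : ∀ k, 1 ≤ k → k ≤ p → ∀ x ∈ Ioc (a (k - 1)) (a k), yhat x = N k x) :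
    (∀ k, 1 ≤ k → k ≤ p → ∀ x ∈ Icc (a (k - 1)) (a k),
      ‖N k x - y x‖ ≤ ε * ∑ j ∈ Finset.Icc 1 k, Real.exp (L * (a k - a j))) ∧
    (∀ x ∈ Icc (0 : ℝ) T, ‖yhat x - y x‖ ≤ (p : ℝ) * ε * Real.exp (L * T)) := by
  have ha : StrictMonoOn a (Iic p) :=
    strictMonoOn_Iic_of_lt_succ fun i hi => by simpa using hmono i hi
  have ha_mem : ∀ i ≤ p, a i ∈ Icc 0 T := fun i hi =>
    ⟨ha0 ▸ ha.monotoneOn (Nat.zero_le p) hi (Nat.zero_le i), haT ▸ ha.monotoneOn hi (le_refl p) hi⟩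
  have hsub : ∀ k, 1 ≤ k → k ≤ p → Icc (a (k - 1)) (a k) ⊆ Icc 0 T := fun k _ hkp =>
    Icc_subset_Icc (ha_mem (k - 1) (by omega)).1 (ha_mem k hkp).2
  have hε : 0 ≤ ε := (norm_nonneg _).trans (happrox 1 le_rfl hp (a 0) ⟨le_rfl, (hmono 0 hp).le⟩)
  have herr := norm_sub_le_pwnnErrorBound hL.le hf_lip (fun i hi => (hmono i hi).le)
    (fun k hk1 hkp x hx => (hy x (hsub k hk1 hkp hx)).mono (hsub k hk1 hkp)) hybar_sol
    (by rw [ha0, hybar_init1, hy0]) hybar_init happrox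
  have hbound : ∀ k, 1 ≤ k → k ≤ p → pwnnErrorBound ε L a k ≤ p * ε * Real.exp (L * T) :=
    fun k hk1 hkp => by
      refine (pwnnErrorBound_le hε fun j hj => ?_).trans (by gcongr)
      have hj := Finset.mem_Icc.1 hj
      exact mul_le_mul_of_nonneg_left
        (by linarith [(ha_mem k hkp).2, (ha_mem j (by omega)).1]) hL.le
  refine ⟨herr, fun x hx => ?_⟩
  rcases hx.1.eq_or_lt with rfl | hx0
  · rw [hyhat0]
    exact (herr 1 le_rfl hp 0 ⟨ha0.le, ha0 ▸ (hmono 0 hp).le⟩).trans (hbound 1 le_rfl hp)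
  · obtain ⟨k, hk1, hkp, hxk⟩ := exists_mem_Ioc_pred_of_mem_Ioc (a := a) ⟨ha0 ▸ hx0, haT ▸ hx.2⟩
    rw [hyhat k hk1 hkp x hxk]
    exact (herr k hk1 hkp x (Ioc_subset_Icc_self hxk)).trans (hbound k hk1 hkp)

/-- Quantitative PWNN approximation: on each sub-interval
`‖Nᵏ(x) − y(x)‖ ≤ ε ∑_{j=1}^{k} e^{L(a_k − a_j)}`, and the assembled piecewise
function `ŷ` satisfies `sup_{x ∈ [0,T]} ‖ŷ(x) − y(x)‖ ≤ p ε e^{LT}`. -/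
theorem pwnn_global_error_bound {n : ℕ}
    (f : ℝ → (Fin n → ℝ) → (Fin n → ℝ)) (L : ℝ) (hL : 0 < L)
    (hf_cont : Continuous (Function.uncurry f))
    (hf_lip : ∀ x : ℝ, LipschitzWith (Real.toNNReal L) (f x))
    (T : ℝ) (y0 : Fin n → ℝ) (y : ℝ → (Fin n → ℝ))
    (hy : ∀ x ∈ Icc (0 : ℝ) T, HasDerivWithinAt y (f x (y x)) (Icc (0 : ℝ) T) x)
    (hy0 : y 0 = y0)
    (p : ℕ) (hp : 1 ≤ p) (a : ℕ → ℝ)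
    (ha0 : a 0 = 0) (haT : a p = T)
    (hmono : ∀ i, i < p → a i < a (i + 1))
    (N ybar : ℕ → ℝ → (Fin n → ℝ))
    (hybar_sol : ∀ k, 1 ≤ k → k ≤ p → ∀ x ∈ Icc (a (k - 1)) (a k),
      HasDerivWithinAt (ybar k) (f x (ybar k x)) (Icc (a (k - 1)) (a k)) x)
    (hybar_init1 : ybar 1 0 = y0)
    (hybar_init : ∀ k, 2 ≤ k → k ≤ p → ybar k (a (k - 1)) = N (k - 1) (a (k - 1)))
    (ε : ℝ)
    (happrox : ∀ k, 1 ≤ k → k ≤ p → ∀ x ∈ Icc (a (k - 1)) (a k), ‖N k x - ybar k x‖ ≤ ε)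
    (yhat : ℝ → (Fin n → ℝ))
    (hyhat0 : yhat 0 = N 1 0)
    (hyhat : ∀ k, 1 ≤ k → k ≤ p → ∀ x ∈ Ioc (a (k - 1)) (a k), yhat x = N k x) :
    (∀ k, 1 ≤ k → k ≤ p → ∀ x ∈ Icc (a (k - 1)) (a k),
      ‖N k x - y x‖ ≤ ε * ∑ j ∈ Finset.Icc 1 k, Real.exp (L * (a k - a j))) ∧
    (∀ x ∈ Icc (0 : ℝ) T, ‖yhat x - y x‖ ≤ (p : ℝ) * ε * Real.exp (L * T)) :=
  pwnn_global_error_bound_general f L hL hf_lip T y0 y hy hy0 p hp a ha0 haT hmono N ybar hybar_sol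
    hybar_init1 hybar_init ε happrox yhat hyhat0 hyhat
end

section
/- Let f : ℝ × ℝⁿ → ℝⁿ be continuous and L-Lipschitz in its second argument (L > 0), and let y : [0,T] → ℝⁿ solve y' = f(x,y), y(0) = y⁰. Let 0 = a₀ < a₁ < ⋯ < a_p = T be a partition, and suppose each Nᵏ : [a_{k-1}, a_k] → ℝⁿ is continuously differentiable with: residual bound ‖(Nᵏ)'(x) − f(x, Nᵏ(x))‖ ≤ η for all x ∈ [a_{k-1}, a_k]; interface/initial mismatch ‖N¹(0) − y⁰‖ ≤ δ and ‖Nᵏ(a_{k-1}) − N^{k-1}(a_{k-1})‖ ≤ δ for k ≥ 2. Then the piecewise function ŷ (ŷ(x) = Nᵏ(x) on (a_{k-1}, a_k], ŷ(0) = N¹(0)) satisfies the global error bound sup_{x ∈ [0,T]} ‖ŷ(x) − y(x)‖ ≤ e^{LT} · p · (δ + η/L). -/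
/-!
On each sub-interval the network `Nᵏ` is an `η`-approximate solution of `y' = f(x, y)`, so by
Grönwall's inequality its distance to `y` grows at most like `e^{L(x - a_{k-1})}(e₀ + η/L)`,
where `e₀` is the error at the left endpoint. The error entering piece `k + 1` is the interface
mismatch `δ` plus the error accumulated over the first `k` pieces, and an induction on `k` shows
that on piece `k` the error is at most `e^{Lx} k (δ + η/L)`.
-/

open Set Real NNReal

lemma gronwallBound_le_exp_mul {δ K ε : ℝ} (hK : 0 < K) (hε : 0 ≤ ε) (x : ℝ) :
    gronwallBound δ K ε x ≤ exp (K * x) * (δ + ε / K) := by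
  rw [gronwallBound_of_K_ne_0 hK.ne']
  have : 0 ≤ ε / K := div_nonneg hε hK.le
  nlinarith

lemma exists_mem_Ioc_succ_of_mem_Ioc {α : Type*} [LinearOrder α] {a : ℕ → α} {p : ℕ} {x : α}
    (hx : x ∈ Ioc (a 0) (a p)) : ∃ k < p, x ∈ Ioc (a k) (a (k + 1)) := by
  induction p with
  | zero => exact absurd hx.2 (not_le.2 hx.1)
  | succ p ih =>
    by_cases hxp : x ≤ a p
    · obtain ⟨k, hkp, hxk⟩ := ih ⟨hx.1, hxp⟩
      exact ⟨k, by omega, hxk⟩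
    · exact ⟨p, p.lt_succ_self, not_le.1 hxp, hx.2⟩

section ApproxSolution

variable {E : Type*} [NormedAddCommGroup E] [NormedSpace ℝ E] {v : ℝ → E → E} {K : ℝ≥0}

lemma norm_sub_le_gronwallBound_of_approx_solution (hv : ∀ t, LipschitzWith K (v t))
    {u u' y : ℝ → E} {a b ε δ : ℝ}
    (hu : ∀ t ∈ Icc a b, HasDerivWithinAt u (u' t) (Icc a b) t)
    (hres : ∀ t ∈ Icc a b, ‖u' t - v t (u t)‖ ≤ ε)
    (hy : ∀ t ∈ Icc a b, HasDerivWithinAt y (v t (y t)) (Icc a b) t)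
    (ha : ‖u a - y a‖ ≤ δ) :
    ∀ t ∈ Icc a b, ‖u t - y t‖ ≤ gronwallBound δ K ε (t - a) := by
  have right_deriv {w w' : ℝ → E} (hw : ∀ t ∈ Icc a b, HasDerivWithinAt w (w' t) (Icc a b) t)
      (t : ℝ) (ht : t ∈ Ico a b) : HasDerivWithinAt w (w' t) (Ici t) t :=
    (hw t (Ico_subset_Icc_self ht)).mono_of_mem_nhdsWithin (Icc_mem_nhdsGE_of_mem ht)
  simpa [dist_eq_norm] using dist_le_of_approx_trajectories_ODE (εg := 0) hv
    (fun t ht => (hu t ht).continuousWithinAt) (right_deriv hu)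
    (fun t ht => by simpa [dist_eq_norm] using hres t (Ico_subset_Icc_self ht))
    (fun t ht => (hy t ht).continuousWithinAt) (right_deriv hy)
    (fun t _ => by simp) (by simpa [dist_eq_norm] using ha)

lemma norm_sub_le_exp_mul_of_piecewise_approx_solution (hK : 0 < K)
    (hv : ∀ t, LipschitzWith K (v t)) {a : ℕ → ℝ} {p : ℕ} (ha : MonotoneOn a (Iic p))
    {y : ℝ → E} (hy : ∀ t ∈ Icc (a 0) (a p), HasDerivWithinAt y (v t (y t)) (Icc (a 0) (a p)) t)
    {N N' : ℕ → ℝ → E} {ε δ : ℝ} (hε : 0 ≤ ε)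
    (hN : ∀ k < p, ∀ t ∈ Icc (a k) (a (k + 1)),
      HasDerivWithinAt (N k) (N' k t) (Icc (a k) (a (k + 1))) t)
    (hres : ∀ k < p, ∀ t ∈ Icc (a k) (a (k + 1)), ‖N' k t - v t (N k t)‖ ≤ ε)
    (hinit : ‖N 0 (a 0) - y (a 0)‖ ≤ δ)
    (hjump : ∀ k, k + 1 < p → ‖N (k + 1) (a (k + 1)) - N k (a (k + 1))‖ ≤ δ) :
    ∀ k < p, ∀ t ∈ Icc (a k) (a (k + 1)),
      ‖N k t - y t‖ ≤ exp (K * (t - a 0)) * (k + 1) * (δ + ε / K) := by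
  set D := δ + ε / K
  have hD : 0 ≤ D := add_nonneg ((norm_nonneg _).trans hinit) (div_nonneg hε K.2)
  have a_le {i j : ℕ} (hij : i ≤ j) (hj : j ≤ p) : a i ≤ a j :=
    ha (mem_Iic.2 (hij.trans hj)) (mem_Iic.2 hj) hij
  have piece {k : ℕ} (hk : k < p) {e : ℝ} (he : ‖N k (a k) - y (a k)‖ ≤ e) :
      ∀ t ∈ Icc (a k) (a (k + 1)), ‖N k t - y t‖ ≤ exp (K * (t - a k)) * (e + ε / K) := by
    have hsub : Icc (a k) (a (k + 1)) ⊆ Icc (a 0) (a p) :=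
      Icc_subset_Icc (a_le k.zero_le hk.le) (a_le hk le_rfl)
    intro t ht
    refine (norm_sub_le_gronwallBound_of_approx_solution hv (hN k hk) (hres k hk)
      (fun s hs => (hy s (hsub hs)).mono hsub) he t ht).trans ?_
    exact gronwallBound_le_exp_mul hK hε _
  intro k
  induction k with
  | zero =>
    intro hp t ht
    simpa using piece hp hinit t ht
  | succ k ih =>
    intro hk t ht
    have ha0k : a 0 ≤ a (k + 1) := a_le (k + 1).zero_le hk.le
    have hentry : ‖N (k + 1) (a (k + 1)) - y (a (k + 1))‖ ≤
        δ + exp (K * (a (k + 1) - a 0)) * (k + 1) * D :=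
      (norm_sub_le_norm_sub_add_norm_sub _ (N k (a (k + 1))) _).trans
        (add_le_add (hjump k hk) (ih (by omega) _ ⟨a_le k.le_succ hk.le, le_rfl⟩))
    have hexp : exp (K * (t - a (k + 1))) ≤ exp (K * (t - a 0)) := by gcongr
    calc ‖N (k + 1) t - y t‖
        ≤ exp (K * (t - a (k + 1))) * (δ + exp (K * (a (k + 1) - a 0)) * (k + 1) * D + ε / K) :=
          piece hk hentry t ht
      _ = exp (K * (t - a (k + 1))) * D + exp (K * (t - a 0)) * (k + 1) * D := by
          rw [show t - a 0 = (t - a (k + 1)) + (a (k + 1) - a 0) by ring, mul_add (K : ℝ), exp_add]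
          ring
      _ ≤ exp (K * (t - a 0)) * D + exp (K * (t - a 0)) * (k + 1) * D := by gcongr
      _ = exp (K * (t - a 0)) * ((k + 1 : ℕ) + 1) * D := by push_cast; ring

end ApproxSolution

theorem pwnn_end_to_end_bound_general {n : ℕ}
    (f : ℝ → (Fin n → ℝ) → (Fin n → ℝ)) (L : ℝ) (hL : 0 < L)
    (hf_lip : ∀ x : ℝ, LipschitzWith (Real.toNNReal L) (f x))
    (T : ℝ) (y0 : Fin n → ℝ) (y : ℝ → (Fin n → ℝ))
    (hy : ∀ x ∈ Icc (0 : ℝ) T, HasDerivWithinAt y (f x (y x)) (Icc (0 : ℝ) T) x)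
    (hy0 : y 0 = y0)
    (p : ℕ) (hp : 1 ≤ p) (a : ℕ → ℝ)
    (ha0 : a 0 = 0) (haT : a p = T)
    (hmono : ∀ i, i < p → a i < a (i + 1))
    (N Nd : ℕ → ℝ → (Fin n → ℝ))
    (hNderiv : ∀ k, 1 ≤ k → k ≤ p → ∀ x ∈ Icc (a (k - 1)) (a k),
      HasDerivWithinAt (N k) (Nd k x) (Icc (a (k - 1)) (a k)) x)
    (η δ : ℝ)
    (hres : ∀ k, 1 ≤ k → k ≤ p → ∀ x ∈ Icc (a (k - 1)) (a k),
      ‖Nd k x - f x (N k x)‖ ≤ η)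
    (hinit1 : ‖N 1 0 - y0‖ ≤ δ)
    (hinterface : ∀ k, 2 ≤ k → k ≤ p →
      ‖N k (a (k - 1)) - N (k - 1) (a (k - 1))‖ ≤ δ)
    (yhat : ℝ → (Fin n → ℝ))
    (hyhat0 : yhat 0 = N 1 0)
    (hyhat : ∀ k, 1 ≤ k → k ≤ p → ∀ x ∈ Ioc (a (k - 1)) (a k), yhat x = N k x) :
    ∀ x ∈ Icc (0 : ℝ) T,
      ‖yhat x - y x‖ ≤ Real.exp (L * T) * (p : ℝ) * (δ + η / L) := by
  have ha : MonotoneOn a (Iic p) :=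
    (strictMonoOn_Iic_of_lt_succ fun m hm => by simpa using hmono m hm).monotoneOn
  have ha01 : a 0 ≤ a 1 := (hmono 0 hp).le
  have hη : 0 ≤ η := (norm_nonneg _).trans (hres 1 le_rfl hp (a 0) ⟨le_rfl, ha01⟩)
  have herr := norm_sub_le_exp_mul_of_piecewise_approx_solution (N := fun k => N (k + 1))
    (N' := fun k => Nd (k + 1)) (ε := η) (δ := δ) (toNNReal_pos.2 hL) hf_lip ha
    (by rwa [ha0, haT]) hη
    (fun k hk => by simpa using hNderiv (k + 1) (by omega) hk)
    (fun k hk => by simpa using hres (k + 1) (by omega) hk)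
    (by rwa [ha0, hy0])
    (fun k hk => by simpa using hinterface (k + 2) (by omega) hk)
  simp only [coe_toNNReal L hL.le, ha0, sub_zero] at herr
  intro x hx
  obtain ⟨k, hk, hxk, hyhat_x⟩ : ∃ k < p, x ∈ Icc (a k) (a (k + 1)) ∧ yhat x = N (k + 1) x := by
    rcases hx.1.eq_or_lt with rfl | hx0
    · exact ⟨0, hp, ⟨ha0.le, ha0 ▸ ha01⟩, hyhat0⟩
    · obtain ⟨k, hk, hxk⟩ := exists_mem_Ioc_succ_of_mem_Ioc (a := a) (p := p)
        (by rw [ha0, haT]; exact ⟨hx0, hx.2⟩)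
      exact ⟨k, hk, Ioc_subset_Icc_self hxk, hyhat (k + 1) (by omega) hk x (by simpa using hxk)⟩
  have hD : 0 ≤ δ + η / L := add_nonneg ((norm_nonneg _).trans hinit1) (div_nonneg hη hL.le)
  calc ‖yhat x - y x‖ ≤ exp (L * x) * (k + 1) * (δ + η / L) := hyhat_x ▸ herr k hk x hxk
    _ ≤ exp (L * T) * p * (δ + η / L) := by
      gcongr
      · exact hx.2
      · exact_mod_cast hk

/-- End-to-end PWNN error bound: if each sub-network `Nᵏ` has ODE residual at most `η` on
its sub-interval and interface/initial mismatch at most `δ`, then the assembled piecewise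
solution `ŷ` satisfies `sup_{x ∈ [0,T]} ‖ŷ(x) − y(x)‖ ≤ e^{LT} p (δ + η/L)`. -/
theorem pwnn_end_to_end_bound {n : ℕ}
    (f : ℝ → (Fin n → ℝ) → (Fin n → ℝ)) (L : ℝ) (hL : 0 < L)
    (hf_cont : Continuous (Function.uncurry f))
    (hf_lip : ∀ x : ℝ, LipschitzWith (Real.toNNReal L) (f x))
    (T : ℝ) (y0 : Fin n → ℝ) (y : ℝ → (Fin n → ℝ))
    (hy : ∀ x ∈ Icc (0 : ℝ) T, HasDerivWithinAt y (f x (y x)) (Icc (0 : ℝ) T) x)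
    (hy0 : y 0 = y0)
    (p : ℕ) (hp : 1 ≤ p) (a : ℕ → ℝ)
    (ha0 : a 0 = 0) (haT : a p = T)
    (hmono : ∀ i, i < p → a i < a (i + 1))
    (N Nd : ℕ → ℝ → (Fin n → ℝ))
    (hNderiv : ∀ k, 1 ≤ k → k ≤ p → ∀ x ∈ Icc (a (k - 1)) (a k),
      HasDerivWithinAt (N k) (Nd k x) (Icc (a (k - 1)) (a k)) x)
    (hNdcont : ∀ k, 1 ≤ k → k ≤ p → ContinuousOn (Nd k) (Icc (a (k - 1)) (a k)))
    (η δ : ℝ)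
    (hres : ∀ k, 1 ≤ k → k ≤ p → ∀ x ∈ Icc (a (k - 1)) (a k),
      ‖Nd k x - f x (N k x)‖ ≤ η)
    (hinit1 : ‖N 1 0 - y0‖ ≤ δ)
    (hinterface : ∀ k, 2 ≤ k → k ≤ p →
      ‖N k (a (k - 1)) - N (k - 1) (a (k - 1))‖ ≤ δ)
    (yhat : ℝ → (Fin n → ℝ))
    (hyhat0 : yhat 0 = N 1 0)
    (hyhat : ∀ k, 1 ≤ k → k ≤ p → ∀ x ∈ Ioc (a (k - 1)) (a k), yhat x = N k x) :
    ∀ x ∈ Icc (0 : ℝ) T,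
      ‖yhat x - y x‖ ≤ Real.exp (L * T) * (p : ℝ) * (δ + η / L) :=
  pwnn_end_to_end_bound_general f L hL hf_lip T y0 y hy hy0 p hp a ha0 haT hmono N Nd hNderiv η δ
    hres hinit1 hinterface yhat hyhat0 hyhat
end
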